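/- arXiv:2107.03597 — 2 statements merged into one kernel-verified Lean document; each statement's English description precedes it below -/
import Mathlib

section
/- Let G be a maximal ancestral graph (MAG) and γ ≥ 1 an integer. Two nodes i and j are non-adjacent in G if and only if there exists a set S contained in the vertex set of the γ-local graph G_γ(i,j) that m-separates i and j within G_γ(i,j). -/
/-!
A path of the γ-local graph is a path of `G` whose triples have the same collider status,
and its descendants in the local graph are descendants in `G`; so a separator given by
maximality, cut down to `V_γ(i,j)`, still blocks every local path. Conversely, an edge
`i - j` lies in the local graph since `1 ≤ γ`, and as a path without inner vertices it
cannot be blocked.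
-/

universe u

/-- A mixed graph with directed, bidirected and undirected edges. -/
structure MixedGraph (V : Type u) where
  dir : V → V → Prop
  bidir : V → V → Prop
  undir : V → V → Prop
  bidir_symm : ∀ a b, bidir a b → bidir b a
  undir_symm : ∀ a b, undir a b → undir b a

namespace MixedGraph

variable {V : Type u} (G : MixedGraph V)

/-- Adjacency in a mixed graph. -/
def Adj (a b : V) : Prop :=
  G.dir a b ∨ G.dir b a ∨ G.bidir a b ∨ G.undir a b

/-- The edge between `a` and `b` has an arrowhead at `b`. -/
def ArrowInto (a b : V) : Prop := G.dir a b ∨ G.bidir a b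

/-- `b` is a descendant of `a` (equivalently `a` is an ancestor of `b`),
allowing trivial directed paths. -/
def Anc (a b : V) : Prop := Relation.ReflTransGen G.dir a b

/-- `b` is a collider on the consecutive triple `(a, b, c)`. -/
def Collider (a b c : V) : Prop := G.ArrowInto a b ∧ G.ArrowInto c b

/-- `π` is a path from `i` to `j`: a list of distinct vertices with consecutive
vertices adjacent, starting at `i` and ending at `j`. -/
def IsPathBetween (i j : V) (π : List V) : Prop :=
  π.Nodup ∧ π.Chain' G.Adj ∧ π.head? = some i ∧ π.getLast? = some j

/-- A set `S` blocks a path `π`: some non-collider of `π` is in `S`, or some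
collider of `π` has no descendant (including itself) in `S`. -/
def Blocks (S : Set V) (π : List V) : Prop :=
  ∃ a b c, [a, b, c] <:+: π ∧
    ((¬ G.Collider a b c ∧ b ∈ S) ∨
     (G.Collider a b c ∧ ∀ d, G.Anc b d → d ∉ S))

/-- `S` m-separates `i` and `j`: every path between them is blocked by `S`. -/
def MSep (i j : V) (S : Set V) : Prop :=
  ∀ π, G.IsPathBetween i j π → G.Blocks S π

/-- Ancestral graph: no directed cycles, no almost directed cycles, and no
arrowhead at an endpoint of an undirected edge. -/
def IsAncestral : Prop :=
  (∀ a b, G.dir a b → ¬ G.Anc b a) ∧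
  (∀ a b, G.bidir a b → ¬ G.Anc a b) ∧
  (∀ a b, G.undir a b → ∀ c, ¬ G.ArrowInto c b)

/-- A maximal ancestral graph (MAG). -/
def IsMAG : Prop :=
  G.IsAncestral ∧
  ∀ i j : V, i ≠ j → ¬ G.Adj i j →
    ∃ S : Set V, S ⊆ {v | v ≠ i ∧ v ≠ j} ∧ G.MSep i j S

/-- Induced subgraph on a vertex set `A` (keeping the ambient vertex type). -/
def induce (A : Set V) : MixedGraph V where
  dir a b := a ∈ A ∧ b ∈ A ∧ G.dir a b
  bidir a b := a ∈ A ∧ b ∈ A ∧ G.bidir a b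
  undir a b := a ∈ A ∧ b ∈ A ∧ G.undir a b
  bidir_symm := fun a b ⟨ha, hb, h⟩ => ⟨hb, ha, G.bidir_symm _ _ h⟩
  undir_symm := fun a b ⟨ha, hb, h⟩ => ⟨hb, ha, G.undir_symm _ _ h⟩

/-- `V_γ(i,j)`: vertices lying on some path between `i` and `j` of length
(number of edges) at most `γ`. -/
def Vγ (γ : ℕ) (i j : V) : Set V :=
  {v | ∃ π, G.IsPathBetween i j π ∧ π.length ≤ γ + 1 ∧ v ∈ π}

/-- The γ-local graph `G_γ(i,j)`: the subgraph induced by `V_γ(i,j)`. -/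
def localGraph (γ : ℕ) (i j : V) : MixedGraph V :=
  G.induce (G.Vγ γ i j)

/-- A γ-local-graph separator of `(i,j)`: a subset of `V_γ(i,j) \ {i,j}`
m-separating `i` and `j` in the γ-local graph. -/
def IsLocalSep (γ : ℕ) (i j : V) (S : Set V) : Prop :=
  S ⊆ G.Vγ γ i j \ {i, j} ∧ (G.localGraph γ i j).MSep i j S

/-- The (η,γ)-local path property: between any two non-adjacent nodes there
are at most η paths of length at most γ. -/
def LocalPathProp (η γ : ℕ) : Prop :=
  ∀ i j : V, i ≠ j → ¬ G.Adj i j →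
    {π : List V | G.IsPathBetween i j π ∧ π.length ≤ γ + 1}.ncard ≤ η

/-- The parents of a vertex. -/
def pa (v : V) : Set V := {u | G.dir u v}

/-- All non-endpoint vertices of `π` are colliders on `π`. -/
def ColliderPathList (π : List V) : Prop :=
  ∀ a b c, [a, b, c] <:+: π → G.Collider a b c

end MixedGraph

/-- The mixed graph of a directed graph. -/
def MixedGraph.ofDir {V : Type u} (E : V → V → Prop) : MixedGraph V where
  dir := E
  bidir _ _ := False
  undir _ _ := False
  bidir_symm := fun _ _ h => h.elim
  undir_symm := fun _ _ h => h.elim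

/-- A directed graph is acyclic. -/
def Acyclic {V : Type u} (E : V → V → Prop) : Prop :=
  ∀ v, ¬ Relation.TransGen E v v

namespace MixedGraph

variable {V : Type u} {G : MixedGraph V} {A S : Set V} {a b c i j : V}

theorem induce_adj_iff : (G.induce A).Adj a b ↔ a ∈ A ∧ b ∈ A ∧ G.Adj a b := by
  simp only [Adj, induce]
  tauto

theorem induce_arrowInto_iff :
    (G.induce A).ArrowInto a b ↔ a ∈ A ∧ b ∈ A ∧ G.ArrowInto a b := by
  simp only [ArrowInto, induce]
  tauto

theorem induce_collider_iff (ha : a ∈ A) (hb : b ∈ A) (hc : c ∈ A) :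
    (G.induce A).Collider a b c ↔ G.Collider a b c := by
  simp only [Collider, induce_arrowInto_iff, ha, hb, hc, true_and]

theorem Anc.of_induce (h : (G.induce A).Anc a b) : G.Anc a b :=
  Relation.ReflTransGen.mono (fun _ _ (hxy : (G.induce A).dir _ _) => hxy.2.2) _ _ h

theorem IsPathBetween.of_induce {π : List V} (h : (G.induce A).IsPathBetween i j π) :
    G.IsPathBetween i j π :=
  ⟨h.1, h.2.1.imp fun _ _ hxy => (induce_adj_iff.1 hxy).2.2, h.2.2⟩

theorem IsPathBetween.pair (hij : i ≠ j) (h : G.Adj i j) : G.IsPathBetween i j [i, j] :=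
  ⟨by simp [hij], List.isChain_pair.2 h, rfl, rfl⟩

theorem not_blocks_pair : ¬ G.Blocks S [a, b] := by
  rintro ⟨x, y, z, hinf, -⟩
  simpa using hinf.length_le

theorem not_mSep_of_adj (hij : i ≠ j) (h : G.Adj i j) : ¬ G.MSep i j S :=
  fun hS => not_blocks_pair (hS _ (IsPathBetween.pair hij h))

theorem MSep.induce (hS : G.MSep i j S) : (G.induce A).MSep i j (S ∩ A) := by
  intro π hπ
  obtain ⟨a, b, c, hinf, hblock⟩ := hS π hπ.of_induce
  obtain ⟨hab, hbc⟩ := List.isChain_cons_cons.1 (hπ.2.1.infix hinf)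
  obtain ⟨ha, hb, -⟩ := induce_adj_iff.1 hab
  obtain ⟨-, hc, -⟩ := induce_adj_iff.1 (List.isChain_cons_cons.1 hbc).1
  refine ⟨a, b, c, hinf, ?_⟩
  rw [induce_collider_iff ha hb hc]
  rcases hblock with ⟨hnc, hbS⟩ | ⟨hcol, hdesc⟩
  · exact Or.inl ⟨hnc, hbS, hb⟩
  · exact Or.inr ⟨hcol, fun d hd hdS => hdesc d hd.of_induce hdS.1⟩

theorem localGraph_adj (γ : ℕ) (hγ : 1 ≤ γ) (hij : i ≠ j) (h : G.Adj i j) :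
    (G.localGraph γ i j).Adj i j := by
  have hV : ∀ v ∈ [i, j], v ∈ G.Vγ γ i j :=
    fun v hv => ⟨[i, j], .pair hij h, by simp; omega, hv⟩
  exact induce_adj_iff.2 ⟨hV i (by simp), hV j (by simp), h⟩

end MixedGraph

/-- In a MAG, two nodes are non-adjacent iff there exists a
γ-local-graph separator for them. -/
theorem stmt0 {V : Type u} (G : MixedGraph V) (hG : G.IsMAG) (γ : ℕ) (hγ : 1 ≤ γ)
    (i j : V) (hij : i ≠ j) :
    ¬ G.Adj i j ↔ ∃ S : Set V, G.IsLocalSep γ i j S := by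
  constructor
  · intro hnadj
    obtain ⟨S, hSij, hS⟩ := hG.2 i j hij hnadj
    refine ⟨S ∩ G.Vγ γ i j, fun v ⟨hvS, hvV⟩ => ⟨hvV, ?_⟩, hS.induce⟩
    simpa [not_or] using hSij hvS
  · rintro ⟨S, -, hS⟩ hadj
    exact MixedGraph.not_mSep_of_adj hij (G.localGraph_adj γ hγ hij hadj) hS
end

section
/- Let G be a DAG whose skeleton satisfies the (η,γ)-local path property (between any two non-adjacent nodes there are at most η paths of length at most γ). Then for every pair of non-adjacent nodes i,j there exists a γ-local-graph separator of (i,j) of size at most η; i.e., L(G,γ) ≤ η. -/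
universe u

/-!
Since `G` is acyclic and `i ≠ j`, one of `i`, `j` — say `i` — is not an ancestor of the other,
also in the local graph. Then the parents of `i` in the local graph separate `i` from `j`: a path
leaving `i` through a parent is blocked at that parent, and a path leaving `i` along an outgoing
edge must turn around at a collider that is a descendant of `i`, none of whose descendants is a
parent of `i`. Each such parent `u` lies on a short `i`–`j` path, and cutting that path short
gives a short path `i, u, …`; distinct parents give distinct paths, so there are at most `η`.
-/

lemma Set.ncard_le_ncard_of_forall_exists_eq_some {α β : Type*} {P : Set α} {B : Set β}
    (f : α → Option β) (hP : P.Finite) (h : ∀ b ∈ B, ∃ a ∈ P, f a = some b) :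
    B.ncard ≤ P.ncard :=
  calc B.ncard = (some '' B).ncard :=
        (Set.ncard_image_of_injective _ (Option.some_injective _)).symm
    _ ≤ (f '' P).ncard := by
      refine Set.ncard_le_ncard ?_ (hP.image f)
      rintro _ ⟨b, hb, rfl⟩
      exact h b hb
    _ ≤ P.ncard := Set.ncard_image_le hP

namespace Acyclic

variable {V : Type u} {E : V → V → Prop}

lemma mono {E' : V → V → Prop} (hE : Acyclic E) (h : ∀ a b, E' a b → E a b) : Acyclic E' :=
  fun v hv => hE v (Relation.TransGen.mono h _ _ hv)

lemma irrefl (hE : Acyclic E) (v : V) : ¬ E v v :=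
  fun h => hE v (.single h)

lemma not_reflTransGen_of_reflTransGen (hE : Acyclic E) {a b : V} (hab : a ≠ b)
    (h : Relation.ReflTransGen E a b) : ¬ Relation.ReflTransGen E b a := by
  intro h'
  rcases Relation.reflTransGen_iff_eq_or_transGen.mp h with rfl | h
  · exact hab rfl
  exact hE a (h.trans_left h')

end Acyclic

namespace MixedGraph

variable {V : Type u} {G : MixedGraph V} {i j : V} {π : List V}

lemma adj_comm (G : MixedGraph V) {a b : V} : G.Adj a b ↔ G.Adj b a := by
  unfold Adj
  constructor <;> rintro (h | h | h | h) <;>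
    first
    | exact Or.inr (Or.inl h)
    | exact Or.inl h
    | exact Or.inr (Or.inr (Or.inl (G.bidir_symm _ _ h)))
    | exact Or.inr (Or.inr (Or.inr (G.undir_symm _ _ h)))

lemma IsPathBetween.reverse (h : G.IsPathBetween i j π) : G.IsPathBetween j i π.reverse := by
  obtain ⟨hnd, hch, hhd, hlt⟩ := h
  refine ⟨List.nodup_reverse.mpr hnd, ?_, by rwa [List.head?_reverse],
    by rwa [List.getLast?_reverse]⟩
  rw [List.Chain', List.isChain_reverse]
  exact hch.imp fun _ _ => G.adj_comm.mp

lemma IsPathBetween.exists_eq_cons_cons_cons (h : G.IsPathBetween i j π) (hij : i ≠ j)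
    (hadj : ¬ G.Adj i j) : ∃ y z l, π = i :: y :: z :: l := by
  obtain ⟨-, hch, hhd, hlt⟩ := h
  match π, hhd with
  | [_], rfl =>
    simp only [List.getLast?_singleton, Option.some_inj] at hlt
    exact absurd hlt hij
  | [_, _], rfl =>
    simp only [List.getLast?_cons_cons, List.getLast?_singleton, Option.some_inj] at hlt
    subst hlt
    exact absurd (List.isChain_cons_cons.mp hch).1 hadj
  | _ :: y :: z :: l, rfl => exact ⟨y, z, l, rfl⟩

lemma IsPathBetween.exists_shortcut (h : G.IsPathBetween i j π) {u : V} (hiu : G.Adj i u)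
    (hu : u ∈ π) (hui : u ≠ i) :
    ∃ τ, G.IsPathBetween i j τ ∧ τ.length ≤ π.length ∧ τ[1]? = some u := by
  obtain ⟨hnd, hch, hhd, hlt⟩ := h
  obtain ⟨t, rfl⟩ : ∃ t, π = i :: t := by
    cases π with
    | nil => simp at hhd
    | cons x t => simp only [List.head?_cons, Option.some_inj] at hhd; exact ⟨t, hhd ▸ rfl⟩
  obtain ⟨pre, suf, rfl⟩ := List.append_of_mem ((List.mem_cons.mp hu).resolve_left hui)
  obtain ⟨hi, hnd⟩ := List.nodup_cons.mp hnd
  refine ⟨i :: u :: suf, ⟨?_, ?_, rfl, ?_⟩, by simp, rfl⟩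
  · exact List.nodup_cons.mpr ⟨fun hmem => hi (List.mem_append_right _ hmem),
      hnd.sublist (List.sublist_append_right pre _)⟩
  · exact List.isChain_cons_cons.mpr ⟨hiu, hch.suffix ⟨i :: pre, by simp⟩⟩
  · rw [List.getLast?_cons_cons]
    rwa [← List.cons_append, List.getLast?_append_of_ne_nil _ (List.cons_ne_nil _ _)] at hlt

lemma MSep.symm {S : Set V} (h : G.MSep i j S) : G.MSep j i S := by
  intro π hπ
  obtain ⟨a, b, c, hinf, hblk⟩ := h π.reverse hπ.reverse
  refine ⟨c, b, a, by simpa using hinf.reverse, ?_⟩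
  rcases hblk with ⟨hnc, hb⟩ | ⟨hc, hb⟩
  · exact Or.inl ⟨fun hc => hnc ⟨hc.2, hc.1⟩, hb⟩
  · exact Or.inr ⟨⟨hc.2, hc.1⟩, hb⟩

lemma Vγ_comm (γ : ℕ) (i j : V) : G.Vγ γ i j = G.Vγ γ j i := by
  suffices ∀ i j, G.Vγ γ i j ⊆ G.Vγ γ j i from (this i j).antisymm (this j i)
  rintro i j v ⟨π, hπ, hlen, hv⟩
  exact ⟨π.reverse, hπ.reverse, by simpa using hlen, by simpa using hv⟩

lemma IsLocalSep.symm {γ : ℕ} {S : Set V} (h : G.IsLocalSep γ i j S) :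
    G.IsLocalSep γ j i S := by
  obtain ⟨hsub, hsep⟩ := h
  refine ⟨by rwa [Vγ_comm, Set.pair_comm], ?_⟩
  rw [localGraph, Vγ_comm]
  exact hsep.symm

section ofDir

variable {E : V → V → Prop}

@[simp]
lemma ofDir_adj {a b : V} : (ofDir E).Adj a b ↔ E a b ∨ E b a := by
  simp [Adj, ofDir]

@[simp]
lemma ofDir_collider {a b c : V} : (ofDir E).Collider a b c ↔ E a b ∧ E c b := by
  simp [Collider, ArrowInto, ofDir]

lemma induce_ofDir (A : Set V) :
    (ofDir E).induce A = ofDir (fun a b => a ∈ A ∧ b ∈ A ∧ E a b) := by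
  simp [induce, ofDir]

lemma exists_collider_of_not_anc {a b j : V} {l : List V} (hab : E a b)
    (hch : (a :: b :: l).IsChain (ofDir E).Adj) (hlast : (a :: b :: l).getLast? = some j)
    (hnanc : ¬ (ofDir E).Anc a j) :
    ∃ x y z, [x, y, z] <:+: a :: b :: l ∧ (ofDir E).Collider x y z ∧ (ofDir E).Anc a y := by
  induction l generalizing a b with
  | nil =>
    simp only [List.getLast?_cons_cons, List.getLast?_singleton, Option.some_inj] at hlast
    exact absurd (hlast ▸ .single hab) hnanc
  | cons c l ih =>
    have hch' := (List.isChain_cons_cons.mp hch).2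
    have hbc : E b c ∨ E c b := ofDir_adj.mp (List.isChain_cons_cons.mp hch').1
    by_cases hcb : E c b
    · exact ⟨a, b, c, ⟨[], l, rfl⟩, ofDir_collider.mpr ⟨hab, hcb⟩, .single hab⟩
    · obtain ⟨x, y, z, hinf, hcol, hby⟩ :=
        ih (hbc.resolve_right hcb) hch' (by simpa using hlast)
          (fun hbj => hnanc (.head hab hbj))
      exact ⟨x, y, z, hinf.trans (List.suffix_cons a _).isInfix, hcol, .head hab hby⟩

theorem msep_pa_of_not_anc (hE : Acyclic E) (hij : i ≠ j) (hadj : ¬ (ofDir E).Adj i j)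
    (hanc : ¬ (ofDir E).Anc i j) : (ofDir E).MSep i j ((ofDir E).pa i) := by
  intro π hπ
  obtain ⟨y, z, l, rfl⟩ := hπ.exists_eq_cons_cons_cons hij hadj
  obtain ⟨-, hch, -, hlast⟩ := hπ
  rcases ofDir_adj.mp (List.isChain_cons_cons.mp hch).1 with hiy | hyi
  · obtain ⟨x, w, z, hinf, hcol, hiw⟩ := exists_collider_of_not_anc hiy hch hlast hanc
    refine ⟨x, w, z, hinf, Or.inr ⟨hcol, fun d hwd hdi => hE i ?_⟩⟩
    exact Relation.TransGen.tail' (hiw.trans hwd) hdi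
  · refine ⟨i, y, z, ⟨[], l, rfl⟩, Or.inl ⟨fun hcol => ?_, hyi⟩⟩
    exact hE i (.tail (.single (ofDir_collider.mp hcol).1) hyi)

theorem exists_isLocalSep_of_not_anc [Finite V] (hE : Acyclic E) {η γ : ℕ}
    (hlp : (ofDir E).LocalPathProp η γ) (hij : i ≠ j)
    (hadj : ¬ (ofDir E).Adj i j) (hanc : ¬ (ofDir E).Anc i j) :
    ∃ S : Set V, (ofDir E).IsLocalSep γ i j S ∧ S.ncard ≤ η := by
  set A := (ofDir E).Vγ γ i j
  set E' : V → V → Prop := fun a b => a ∈ A ∧ b ∈ A ∧ E a b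
  have hlocal : (ofDir E).localGraph γ i j = ofDir E' := induce_ofDir A
  have hE' : Acyclic E' := hE.mono fun _ _ h => h.2.2
  have hpa : ∀ u ∈ (ofDir E').pa i, u ∈ A ∧ E u i := fun u hu => ⟨hu.1, hu.2.2⟩
  refine ⟨(ofDir E').pa i, ⟨fun u hu => ?_, ?_⟩, ?_⟩
  · obtain ⟨huA, hui⟩ := hpa u hu
    refine ⟨huA, ?_⟩
    rintro (rfl | rfl)
    · exact hE.irrefl u hui
    · exact hadj (ofDir_adj.mpr (Or.inr hui))
  · rw [hlocal]
    refine msep_pa_of_not_anc hE' hij (fun h => hadj ?_) (fun h => hanc ?_)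
    · exact ofDir_adj.mpr ((ofDir_adj.mp h).imp (·.2.2) (·.2.2))
    · exact Relation.ReflTransGen.mono (fun _ _ h => h.2.2) _ _ h
  · refine (Set.ncard_le_ncard_of_forall_exists_eq_some (fun τ : List V => τ[1]?)
      ((List.finite_length_le V (γ + 1)).subset fun τ hτ => hτ.2) fun u hu => ?_).trans
      (hlp i j hij hadj)
    obtain ⟨⟨π, hπ, hlen, huπ⟩, hui⟩ := hpa u hu
    obtain ⟨τ, hτ, hτlen, hτu⟩ :=
      hπ.exists_shortcut (ofDir_adj.mpr (Or.inr hui)) huπ fun h => hE.irrefl u (h ▸ hui)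
    exact ⟨τ, ⟨hτ, hτlen.trans hlen⟩, hτu⟩

end ofDir

end MixedGraph

/-- For a DAG whose skeleton satisfies the (η,γ)-local path property,
every non-adjacent pair admits a γ-local-graph separator of size at most η. -/
theorem stmt2 {V : Type u} [Fintype V] (E : V → V → Prop) (hacyc : Acyclic E)
    (η γ : ℕ) (hlp : (MixedGraph.ofDir E).LocalPathProp η γ)
    (i j : V) (hij : i ≠ j) (hadj : ¬ (MixedGraph.ofDir E).Adj i j) :
    ∃ S : Set V, (MixedGraph.ofDir E).IsLocalSep γ i j S ∧ S.ncard ≤ η := by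
  by_cases hanc : (MixedGraph.ofDir E).Anc i j
  · obtain ⟨S, hS, hcard⟩ := MixedGraph.exists_isLocalSep_of_not_anc hacyc hlp hij.symm
      (by rwa [MixedGraph.adj_comm]) (hacyc.not_reflTransGen_of_reflTransGen hij hanc)
    exact ⟨S, hS.symm, hcard⟩
  · exact MixedGraph.exists_isLocalSep_of_not_anc hacyc hlp hij hadj hanc
end
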